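/- Let k be a field. The endomorphism of the k-algebra k[x,y]/(xy) determined by x ↦ x + x² and y ↦ y is a well-defined injective k-algebra endomorphism which is not surjective; in particular it is not an automorphism. -/

import Mathlib

/-!
An element of `k[x,y]/(xy)` is determined by its restrictions to the two coordinate axes,
which are polynomials in one variable: modulo `y` it is a polynomial in `x`, and what is left,
a multiple `y b`, is detected on the `y`-axis. The endomorphism acts on the `x`-axis as the
substitution `p ↦ p(X + X²)` and trivially on the `y`-axis. Substituting a nonconstant polynomial
is injective on `k[X]`, whence injectivity; it also doubles degrees, so `x`, whose restriction
`X` has degree one, is not in the image.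
-/

noncomputable section
open MvPolynomial

/-- The algebra `k[x,y]/(xy)`. -/
abbrev Axy (k : Type) [Field k] : Type :=
  MvPolynomial (Fin 2) k ⧸ Ideal.span {(X 0 : MvPolynomial (Fin 2) k) * X 1}

/-- The class of `x` in `k[x,y]/(xy)`. -/
def xbar (k : Type) [Field k] : Axy k := Ideal.Quotient.mk _ (X 0)

/-- The class of `y` in `k[x,y]/(xy)`. -/
def ybar (k : Type) [Field k] : Axy k := Ideal.Quotient.mk _ (X 1)

open scoped Polynomial

namespace Axy

variable {k : Type} [Field k] {A : Type*} [CommSemiring A] [Algebra k A]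

theorem xbar_mul_ybar : xbar k * ybar k = 0 :=
  Ideal.Quotient.eq_zero_iff_mem.mpr (Ideal.mem_span_singleton_self _)

def lift (a b : A) (hab : a * b = 0) : Axy k →ₐ[k] A :=
  Ideal.Quotient.liftₐ _ (aeval ![a, b]) fun f hf => by
    obtain ⟨c, rfl⟩ := Ideal.mem_span_singleton'.mp hf
    simp [hab]

@[simp]
theorem lift_xbar (a b : A) (hab : a * b = 0) : lift a b hab (xbar k) = a :=
  aeval_X _ 0

@[simp]
theorem lift_ybar (a b : A) (hab : a * b = 0) : lift a b hab (ybar k) = b :=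
  aeval_X _ 1

theorem algHom_ext {f g : Axy k →ₐ[k] A} (hx : f (xbar k) = g (xbar k))
    (hy : f (ybar k) = g (ybar k)) : f = g :=
  Ideal.Quotient.algHom_ext k <| MvPolynomial.algHom_ext fun i => by
    fin_cases i
    exacts [hx, hy]

def toXAxis : Axy k →ₐ[k] k[X] := lift Polynomial.X 0 (mul_zero _)

def toYAxis : Axy k →ₐ[k] k[X] := lift 0 Polynomial.X (zero_mul _)

@[simp] theorem toXAxis_xbar : toXAxis (xbar k) = Polynomial.X := lift_xbar _ _ _
@[simp] theorem toXAxis_ybar : toXAxis (ybar k) = 0 := lift_ybar _ _ _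
@[simp] theorem toYAxis_xbar : toYAxis (xbar k) = 0 := lift_xbar _ _ _
@[simp] theorem toYAxis_ybar : toYAxis (ybar k) = Polynomial.X := lift_ybar _ _ _

theorem ybar_dvd_sub_aeval_toXAxis (a : Axy k) :
    ybar k ∣ a - Polynomial.aeval (xbar k) (toXAxis a) := by
  set J := Ideal.span {ybar k}
  have h : (Ideal.Quotient.mkₐ k J).comp ((Polynomial.aeval (R := k) (xbar k)).comp toXAxis) =
      Ideal.Quotient.mkₐ k J := by
    refine Axy.algHom_ext (A := Axy k ⧸ J) (by simp) ?_
    simpa using (Ideal.Quotient.eq_zero_iff_mem.mpr (Ideal.mem_span_singleton_self _)).symm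
  exact Ideal.mem_span_singleton.mp (Ideal.Quotient.eq.mp (AlgHom.congr_fun h a).symm)

theorem xbar_dvd_sub_aeval_toYAxis (a : Axy k) :
    xbar k ∣ a - Polynomial.aeval (ybar k) (toYAxis a) := by
  set J := Ideal.span {xbar k}
  have h : (Ideal.Quotient.mkₐ k J).comp ((Polynomial.aeval (R := k) (ybar k)).comp toYAxis) =
      Ideal.Quotient.mkₐ k J := by
    refine Axy.algHom_ext (A := Axy k ⧸ J) ?_ (by simp)
    simpa using (Ideal.Quotient.eq_zero_iff_mem.mpr (Ideal.mem_span_singleton_self _)).symm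
  exact Ideal.mem_span_singleton.mp (Ideal.Quotient.eq.mp (AlgHom.congr_fun h a).symm)

theorem eq_zero_of_toXAxis_eq_zero_of_toYAxis_eq_zero {a : Axy k} (hx : toXAxis a = 0)
    (hy : toYAxis a = 0) : a = 0 := by
  obtain ⟨b, hb⟩ := ybar_dvd_sub_aeval_toXAxis a
  rw [hx, map_zero, sub_zero] at hb
  have hb' : toYAxis b = 0 := by
    rwa [hb, map_mul, toYAxis_ybar, mul_eq_zero, or_iff_right Polynomial.X_ne_zero] at hy
  obtain ⟨c, hc⟩ := xbar_dvd_sub_aeval_toYAxis b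
  rw [hb', map_zero, sub_zero] at hc
  rw [hb, hc, mul_left_comm, ← mul_assoc, xbar_mul_ybar, zero_mul]

theorem toXAxis_map_eq_comp {q : k[X]} {F : Axy k →ₐ[k] Axy k}
    (hx : F (xbar k) = Polynomial.aeval (xbar k) q) (hy : F (ybar k) = ybar k) (a : Axy k) :
    toXAxis (F a) = (toXAxis a).comp q := by
  have h : toXAxis.comp F = (Polynomial.aeval q).comp toXAxis :=
    Axy.algHom_ext (by simp [hx, ← Polynomial.aeval_algHom_apply]) (by simp [hy])
  rw [Polynomial.comp_eq_aeval]
  exact AlgHom.congr_fun h a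

theorem toYAxis_map_eq {F : Axy k →ₐ[k] Axy k} (hy : F (ybar k) = ybar k) (a : Axy k) :
    toYAxis (F a) = toYAxis a := by
  -- `F x` is killed by `F y = y`, so it vanishes on the `y`-axis.
  have hFx : toYAxis (F (xbar k)) = 0 := by
    simpa [hy, Polynomial.X_ne_zero] using congrArg (toYAxis.comp F) (xbar_mul_ybar (k := k))
  have h : toYAxis.comp F = toYAxis := Axy.algHom_ext (by simpa using hFx) (by simp [hy])
  exact AlgHom.congr_fun h a

theorem injective_of_map_xbar_eq_aeval {q : k[X]} (hq : q.natDegree ≠ 0)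
    {F : Axy k →ₐ[k] Axy k} (hx : F (xbar k) = Polynomial.aeval (xbar k) q)
    (hy : F (ybar k) = ybar k) : Function.Injective F := by
  refine (injective_iff_map_eq_zero F).mpr fun a ha => ?_
  refine eq_zero_of_toXAxis_eq_zero_of_toYAxis_eq_zero ?_ ?_
  · have hcomp := toXAxis_map_eq_comp hx hy a
    rw [ha, map_zero, eq_comm, Polynomial.comp_eq_zero_iff] at hcomp
    refine hcomp.resolve_right fun ⟨_, hC⟩ => hq ?_
    rw [hC, Polynomial.natDegree_C]
  · rw [← toYAxis_map_eq hy, ha, map_zero]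

theorem not_surjective_of_map_xbar_eq_aeval {q : k[X]} (hq : q.natDegree ≠ 1)
    {F : Axy k →ₐ[k] Axy k} (hx : F (xbar k) = Polynomial.aeval (xbar k) q)
    (hy : F (ybar k) = ybar k) : ¬ Function.Surjective F := by
  intro hF
  obtain ⟨a, ha⟩ := hF (xbar k)
  have hdeg := congrArg (fun a => (toXAxis a).natDegree) ha
  simp only [toXAxis_map_eq_comp hx hy, Polynomial.natDegree_comp, toXAxis_xbar,
    Polynomial.natDegree_X] at hdeg
  exact hq (Nat.eq_one_of_mul_eq_one_left hdeg)

end Axy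

open Axy in
/-- The endomorphism of `k[x,y]/(xy)` determined by `x ↦ x + x²`, `y ↦ y`
is a well-defined `k`-algebra endomorphism (existence), and any `k`-algebra endomorphism
with these values on `x` and `y` is injective but not surjective; in particular it is not
an automorphism. -/
theorem stmt_5 (k : Type) [Field k] :
    (∃ F : Axy k →ₐ[k] Axy k, F (xbar k) = xbar k + xbar k ^ 2 ∧ F (ybar k) = ybar k) ∧
    (∀ F : Axy k →ₐ[k] Axy k, F (xbar k) = xbar k + xbar k ^ 2 → F (ybar k) = ybar k →
      Function.Injective F ∧ ¬ Function.Surjective F) := by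
  have hwd : (xbar k + xbar k ^ 2) * ybar k = 0 := by
    linear_combination (1 + xbar k) * xbar_mul_ybar (k := k)
  refine ⟨⟨lift _ _ hwd, lift_xbar .., lift_ybar ..⟩, fun F hx hy => ?_⟩
  have hx' : F (xbar k) = Polynomial.aeval (xbar k) (Polynomial.X + Polynomial.X ^ 2 : k[X]) := by
    simpa using hx
  have hdeg : (Polynomial.X + Polynomial.X ^ 2 : k[X]).natDegree = 2 := by
    compute_degree!
  exact ⟨injective_of_map_xbar_eq_aeval (by omega) hx' hy,
    not_surjective_of_map_xbar_eq_aeval (by omega) hx' hy⟩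

end
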